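/- arXiv:2508.19817 — 3 statements merged into one kernel-verified Lean document; each statement's English description precedes it below -/
import Mathlib

section
/- Let γ, ψ, β, N > 0 and μ + λ > δ, and define R₀ = βψN / ((γ+ψ)(μ+λ−δ)). Then both eigenvalues of the matrix J = [[−(γ+ψ), βN],[ψ, δ−μ−λ]] have negative real part if and only if R₀ < 1. -/
/-!
With trace `-(γ + ψ) - (μ + λ - δ) < 0`, the characteristic polynomial of `J` is
`z² + p z + q` with `p > 0` and `q = det J`. Such a quadratic has a real root `≥ 0` when `q ≤ 0`;
when `q > 0`, a non-real root has real part `-p / 2` and a real root `x ≥ 0` would give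
`x² + p x + q > 0`. So the spectrum lies in the open left half-plane iff `det J > 0`, and
`det J = (γ + ψ)(μ + λ - δ) - βNψ` is positive exactly when `R₀ < 1`.
-/

open Matrix

theorem Matrix.mem_spectrum_iff_fin_two {K : Type*} [Field K] (A : Matrix (Fin 2) (Fin 2) K)
    (z : K) : z ∈ spectrum K A ↔ z ^ 2 - A.trace * z + A.det = 0 := by
  simp [mem_spectrum_iff_isRoot_charpoly, charpoly_fin_two]

theorem Complex.forall_re_neg_of_quadratic_eq_zero_iff {p q : ℝ} (hp : 0 < p) :
    (∀ z : ℂ, z ^ 2 + p * z + q = 0 → z.re < 0) ↔ 0 < q := by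
  constructor
  · intro h
    by_contra! hq
    obtain ⟨x, hx_nonneg, hx_root⟩ : ∃ x : ℝ, 0 ≤ x ∧ x ^ 2 + p * x + q = 0 := by
      set r := √(p ^ 2 - 4 * q)
      have hr : r ^ 2 = p ^ 2 - 4 * q := Real.sq_sqrt (by nlinarith)
      have hpr : p ≤ r := Real.le_sqrt_of_sq_le (by linarith)
      exact ⟨(r - p) / 2, by linarith, by linear_combination hr / 4⟩
    have hx_neg := h x (by exact_mod_cast hx_root)
    rw [ofReal_re] at hx_neg
    linarith
  · intro hq z hz
    by_contra! hre_nonneg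
    have hre := congrArg re hz
    have him := congrArg im hz
    simp only [sq, add_re, mul_re, ofReal_re, ofReal_im, zero_mul, sub_zero, zero_re, add_im,
      mul_im, add_zero, zero_im] at hre him
    have hz_real : z.im = 0 := by
      have : z.im * (2 * z.re + p) = 0 := by linear_combination him
      exact (mul_eq_zero.1 this).resolve_right (by positivity)
    rw [hz_real] at hre
    nlinarith

theorem Matrix.forall_re_neg_of_mem_spectrum_iff_det_pos {A : Matrix (Fin 2) (Fin 2) ℝ}
    (hA : A.trace < 0) :
    (∀ z ∈ spectrum ℂ (A.map (algebraMap ℝ ℂ)), z.re < 0) ↔ 0 < A.det := by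
  have hspec (z : ℂ) : z ∈ spectrum ℂ (A.map (algebraMap ℝ ℂ)) ↔
      z ^ 2 + (-A.trace : ℝ) * z + (A.det : ℝ) = 0 := by
    rw [mem_spectrum_iff_fin_two]
    push_cast [trace_fin_two, det_fin_two, map_apply, Complex.coe_algebraMap]
    ring_nf
  simp_rw [hspec]
  exact Complex.forall_re_neg_of_quadratic_eq_zero_iff (neg_pos.2 hA)

theorem sfe_local_stability_general
    (γ ψ δ μ lam β N : ℝ)
    (hγ : 0 < γ) (hψ : 0 < ψ)
    (hmld : μ + lam > δ)
    (R₀ : ℝ) (hR₀ : R₀ = β * ψ * N / ((γ + ψ) * (μ + lam - δ)))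
    (J : Matrix (Fin 2) (Fin 2) ℝ)
    (hJ : J = !![-(γ + ψ), β * N; ψ, δ - μ - lam]) :
    (∀ z : ℂ, z ∈ spectrum ℂ (J.map (algebraMap ℝ ℂ)) → z.re < 0) ↔ R₀ < 1 := by
  have hγψ : 0 < γ + ψ := by positivity
  have hμlamδ : 0 < μ + lam - δ := by linarith
  have htrace : J.trace < 0 := by
    rw [hJ, trace_fin_two_of]
    linarith
  have hdet : J.det = (γ + ψ) * (μ + lam - δ) - β * ψ * N := by
    rw [hJ, det_fin_two_of]
    ring
  rw [forall_re_neg_of_mem_spectrum_iff_det_pos htrace, hdet, sub_pos, hR₀,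
    div_lt_one (by positivity)]

/-- Both eigenvalues of the infected-subsystem Jacobian at the
scam-free equilibrium have negative real part iff `R₀ < 1`. -/
theorem sfe_local_stability
    (γ ψ δ μ lam β N : ℝ)
    (hγ : 0 < γ) (hψ : 0 < ψ) (hβ : 0 < β) (hN : 0 < N)
    (hmld : μ + lam > δ)
    (R₀ : ℝ) (hR₀ : R₀ = β * ψ * N / ((γ + ψ) * (μ + lam - δ)))
    (J : Matrix (Fin 2) (Fin 2) ℝ)
    (hJ : J = !![-(γ + ψ), β * N; ψ, δ - μ - lam]) :
    (∀ z : ℂ, z ∈ spectrum ℂ (J.map (algebraMap ℝ ℂ)) → z.re < 0) ↔ R₀ < 1 :=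
  sfe_local_stability_general γ ψ δ μ lam β N hγ hψ hmld R₀ hR₀ J hJ
end

section
/- Suppose γ, ψ > 0, μ + λ > δ, β ≥ 0, and let R₀ = βψN/((γ+ψ)(μ+λ−δ)) with N > 0. Define L(t) = (ψ/(γ+ψ))·V(t) + A_s(t) along solutions of the scam model with 0 ≤ S(t) ≤ N. Then L'(t) ≤ (μ+λ−δ)(R₀ − 1)·A_s(t) whenever V(t), A_s(t) ≥ 0. In particular if R₀ < 1 and A_s(t) ≥ 0 then L'(t) ≤ 0. -/
/-!
With the weight `ψ/(γ+ψ)` on `V`, the loss `(γ+ψ)V` of the first equation exactly cancels the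
gain `ψV` of the second, so `L' = (ψ/(γ+ψ) β S − (μ+λ−δ)) A_s`. Bounding `S ≤ N` (using
`β, A_s ≥ 0`) turns the bracket into `ψβN/(γ+ψ) − (μ+λ−δ) = (μ+λ−δ)(R₀ − 1)`.
-/

section ScamModel

variable {γ ψ δ μ lam β : ℝ}

theorem scam_lyapunov_rhs_eq (hγψ : γ + ψ ≠ 0) (s v a : ℝ) :
    ψ / (γ + ψ) * (β * s * a - (γ + ψ) * v) + ((δ - μ - lam) * a + ψ * v)
      = (ψ / (γ + ψ) * β * s - (μ + lam - δ)) * a := by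
  field_simp
  ring

theorem scam_lyapunov_rate_eq (hγψ : γ + ψ ≠ 0) (hmld : μ + lam - δ ≠ 0) (N : ℝ) :
    ψ / (γ + ψ) * β * N - (μ + lam - δ)
      = (μ + lam - δ) * (β * ψ * N / ((γ + ψ) * (μ + lam - δ)) - 1) := by
  field_simp

end ScamModel

theorem lyapunov_derivative_bound_general
    (γ ψ δ μ lam β N : ℝ)
    (hγ : 0 < γ) (hψ : 0 < ψ) (hmld : μ + lam > δ) (hβ : 0 ≤ β)
    (R₀ : ℝ) (hR₀ : R₀ = β * ψ * N / ((γ + ψ) * (μ + lam - δ)))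
    (S V A : ℝ → ℝ)
    (hS : ∀ t, 0 ≤ S t ∧ S t ≤ N)
    (hV : ∀ t, HasDerivAt V (β * S t * A t - (γ + ψ) * V t) t)
    (hA : ∀ t, HasDerivAt A ((δ - μ - lam) * A t + ψ * V t) t)
    (L : ℝ → ℝ) (hL : L = fun t => ψ / (γ + ψ) * V t + A t) :
    (∀ t, 0 ≤ V t → 0 ≤ A t →
      deriv L t ≤ (μ + lam - δ) * (R₀ - 1) * A t) ∧
    (R₀ < 1 → ∀ t, 0 ≤ V t → 0 ≤ A t → deriv L t ≤ 0) := by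
  have hγψ : 0 < γ + ψ := add_pos hγ hψ
  have hm : 0 < μ + lam - δ := sub_pos.mpr hmld
  have bound : ∀ t, 0 ≤ A t → deriv L t ≤ (μ + lam - δ) * (R₀ - 1) * A t := by
    intro t hAt
    have hLt : HasDerivAt L (ψ / (γ + ψ) * (β * S t * A t - (γ + ψ) * V t)
        + ((δ - μ - lam) * A t + ψ * V t)) t := hL ▸ ((hV t).const_mul _).add (hA t)
    have hSN : ψ / (γ + ψ) * β * S t ≤ ψ / (γ + ψ) * β * N :=
      mul_le_mul_of_nonneg_left (hS t).2 (by positivity)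
    rw [hLt.deriv, scam_lyapunov_rhs_eq hγψ.ne', hR₀, ← scam_lyapunov_rate_eq hγψ.ne' hm.ne']
    exact mul_le_mul_of_nonneg_right (sub_le_sub_right hSN _) hAt
  refine ⟨fun t _ hAt => bound t hAt, fun hR t _ hAt => (bound t hAt).trans ?_⟩
  exact mul_nonpos_of_nonpos_of_nonneg (mul_nonpos_of_nonneg_of_nonpos hm.le (by linarith)) hAt

/-- The Lyapunov function `L = (ψ/(γ+ψ))V + A_s` satisfies
`L' ≤ (μ+λ−δ)(R₀ − 1)A_s` along solutions; in particular `L' ≤ 0` if `R₀ < 1`. -/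
theorem lyapunov_derivative_bound
    (γ ψ δ μ lam β N : ℝ)
    (hγ : 0 < γ) (hψ : 0 < ψ) (hmld : μ + lam > δ) (hβ : 0 ≤ β) (hN : 0 < N)
    (R₀ : ℝ) (hR₀ : R₀ = β * ψ * N / ((γ + ψ) * (μ + lam - δ)))
    (S V A : ℝ → ℝ)
    (hS : ∀ t, 0 ≤ S t ∧ S t ≤ N)
    (hV : ∀ t, HasDerivAt V (β * S t * A t - (γ + ψ) * V t) t)
    (hA : ∀ t, HasDerivAt A ((δ - μ - lam) * A t + ψ * V t) t)
    (L : ℝ → ℝ) (hL : L = fun t => ψ / (γ + ψ) * V t + A t) :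
    (∀ t, 0 ≤ V t → 0 ≤ A t →
      deriv L t ≤ (μ + lam - δ) * (R₀ - 1) * A t) ∧
    (R₀ < 1 → ∀ t, 0 ≤ V t → 0 ≤ A t → deriv L t ≤ 0) :=
  lyapunov_derivative_bound_general γ ψ δ μ lam β N hγ hψ hmld hβ R₀ hR₀ S V A hS hV hA L hL
end

section
/- By induction, for any nonnegative initial vector (S₀, V₀, R₀, A₀, Rs₀) ∈ ℝ₊⁵ and any nonnegative parameters, the sequence generated by iterating the NSFD update map remains in the nonnegative orthant for all k ∈ ℕ. -/
/-- Iterating the NSFD update map from a nonnegative initial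
vector keeps all compartments nonnegative for every `k ∈ ℕ`. -/
theorem nsfd_iterates_nonneg
    (β σ γ ψ δ μ lam θ : ℝ)
    (hβ : 0 ≤ β) (hσ : 0 ≤ σ) (hγ : 0 ≤ γ) (hψ : 0 ≤ ψ)
    (hδ : 0 ≤ δ) (hμ : 0 ≤ μ) (hlam : 0 ≤ lam) (hθ : 0 < θ)
    (S V R A Rs : ℕ → ℝ)
    (hS0 : 0 ≤ S 0) (hV0 : 0 ≤ V 0) (hR0 : 0 ≤ R 0)
    (hA0 : 0 ≤ A 0) (hRs0 : 0 ≤ Rs 0)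
    (hS : ∀ k, S (k + 1) = (S k + θ * σ * R k) / (1 + θ * β * A k))
    (hV : ∀ k, V (k + 1) = (V k + θ * β * S k * A k) / (1 + θ * (γ + ψ)))
    (hR : ∀ k, R (k + 1) = (R k + θ * γ * V k) / (1 + θ * σ))
    (hA : ∀ k, A (k + 1) = (A k * (1 + θ * δ) + θ * ψ * V k) / (1 + θ * (μ + lam)))
    (hRs : ∀ k, Rs (k + 1) = Rs k + θ * lam * A (k + 1)) :
    ∀ k : ℕ, 0 ≤ S k ∧ 0 ≤ V k ∧ 0 ≤ R k ∧ 0 ≤ A k ∧ 0 ≤ Rs k := by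
  have hθ₀ : 0 ≤ θ := hθ.le
  intro k
  induction k with
  | zero => exact ⟨hS0, hV0, hR0, hA0, hRs0⟩
  | succ k ih =>
    obtain ⟨hSk, hVk, hRk, hAk, hRsk⟩ := ih
    -- The scheme has no subtractions: each update is a ratio of nonnegative combinations.
    have hA' : 0 ≤ A (k + 1) := by rw [hA]; positivity
    refine ⟨?_, ?_, ?_, hA', ?_⟩
    · rw [hS]; positivity
    · rw [hV]; positivity
    · rw [hR]; positivity
    · rw [hRs]; positivity
end
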